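/- Let ρ and σ be quantum states on ℂ^{d_A} ⊗ ℂ^{d_B}. Then D_∞^{SEP(A:B)}(ρ‖σ) = sup { log( tr[ρω] / tr[σω] ) : ω positive definite and separable }, and D_∞^{PPT(A:B)}(ρ‖σ) = sup { log( tr[ρω] / tr[σω] ) : ω positive definite with ω^Γ positive semidefinite }. -/

import Mathlib

open scoped Kronecker ComplexOrder
open Matrix Filter

noncomputable section
open scoped Classical

namespace MRD

/-- A POVM on the Hilbert space `ℂ^n` (for a finite index type `n`), over a finite
outcome alphabet `ι`. -/
structure POVM (n : Type) [Fintype n] [DecidableEq n] where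
  ι : Type
  [fin : Fintype ι]
  elem : ι → Matrix n n ℂ
  pos : ∀ z, (elem z).PosSemidef
  sum_one : ∑ z, elem z = 1

attribute [instance] POVM.fin

variable {n : Type} [Fintype n] [DecidableEq n]

/-- The probability distribution induced by a state and a POVM (Born rule). -/
def POVM.dist (M : POVM n) (ρ : Matrix n n ℂ) : M.ι → ℝ :=
  fun z => ((ρ * M.elem z).trace).re

/-- `tr2 A B = Re tr[A B]`. -/
def tr2 (A B : Matrix n n ℂ) : ℝ := ((A * B).trace).re

/-- The cone `C_ℳ` generated by a set of POVMs: the union of the conical hulls of the POVMs. -/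
def cone (𝓜 : Set (POVM n)) : Set (Matrix n n ℂ) :=
  { ω | ∃ M ∈ 𝓜, ∃ lam : M.ι → ℝ, (∀ z, 0 ≤ lam z) ∧ ω = ∑ z, (lam z : ℂ) • M.elem z }

/-- Functional calculus for Hermitian matrices (junk value `0` on non-Hermitian input). -/
def hermCFC (f : ℝ → ℝ) (ω : Matrix n n ℂ) : Matrix n n ℂ :=
  if h : ω.IsHermitian then
    (h.eigenvectorUnitary : Matrix n n ℂ) * Matrix.diagonal (fun i => (f (h.eigenvalues i) : ℂ)) *
      star (h.eigenvectorUnitary : Matrix n n ℂ)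
  else 0

/-- Real powers of a (Hermitian, positive definite) matrix, via functional calculus. -/
def mpow (ω : Matrix n n ℂ) (p : ℝ) : Matrix n n ℂ := hermCFC (fun x => x ^ p) ω

/-- Logarithm of a (Hermitian, positive definite) matrix, via functional calculus. -/
def mlog (ω : Matrix n n ℂ) : Matrix n n ℂ := hermCFC Real.log ω

/-- The classical quantity `Q_α(μ‖ν) = ∑_z μ(z)^α ν(z)^(1-α)`. -/
def Qclass {Z : Type} [Fintype Z] (α : ℝ) (μ ν : Z → ℝ) : ℝ :=
  ∑ z, μ z ^ α * ν z ^ (1 - α)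

/-- `Q_α` for `α > 1`, valued in `[0,∞]`: it is `+∞` unless `μ ≪ ν`. -/
def QclassE {Z : Type} [Fintype Z] (α : ℝ) (μ ν : Z → ℝ) : EReal :=
  if ∀ z, ν z = 0 → μ z = 0 then ((Qclass α μ ν : ℝ) : EReal) else ⊤

/-- The classical max-divergence `D_∞(μ‖ν) = max_{z : μ(z) ≠ 0} log (μ(z)/ν(z))`,
with the convention `log (c/0) = +∞`. -/
def Dmax {Z : Type} [Fintype Z] (μ ν : Z → ℝ) : EReal :=
  ⨆ z : {z : Z // μ z ≠ 0},
    (if ν z.1 = 0 then (⊤ : EReal) else ((Real.log (μ z.1 / ν z.1) : ℝ) : EReal))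

/-- The classical Rényi divergence of order `α ∈ (0,∞]` (`α : EReal`), with the standard
conventions for `+∞` in the non-absolutely-continuous / orthogonal cases. -/
def rdiv {Z : Type} [Fintype Z] (α : EReal) (μ ν : Z → ℝ) : EReal :=
  if α = ⊤ then Dmax μ ν
  else if α = 1 then
    (if ∀ z, ν z = 0 → μ z = 0 then
      (((∑ z, μ z * Real.log (μ z / ν z)) : ℝ) : EReal) else ⊤)
  else if 1 < α then
    (if ∀ z, ν z = 0 → μ z = 0 then
      (((α.toReal - 1)⁻¹ * Real.log (Qclass α.toReal μ ν) : ℝ) : EReal) else ⊤)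
  else
    (if ∃ z, μ z ≠ 0 ∧ ν z ≠ 0 then
      (((α.toReal - 1)⁻¹ * Real.log (Qclass α.toReal μ ν) : ℝ) : EReal) else ⊤)

/-- The measured Rényi divergence `D_α^ℳ(ρ‖σ) = sup_{M ∈ ℳ} D_α(μ_ρ^M‖μ_σ^M)`. -/
def mrdiv (𝓜 : Set (POVM n)) (α : EReal) (ρ σ : Matrix n n ℂ) : EReal :=
  ⨆ M ∈ 𝓜, rdiv α (M.dist ρ) (M.dist σ)

/-- The variational objective function `ν_α((ρ,σ); ω)`, for `α ∈ (0,∞]`. -/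
def nuObj (α : EReal) (ρ σ ω : Matrix n n ℂ) : ℝ :=
  if α = ⊤ then Real.log (tr2 ρ ω) + 1 - tr2 σ ω
  else if α = 1 then tr2 ρ (mlog ω) + 1 - tr2 σ ω
  else if α.toReal < 1 / 2 then
    (α.toReal - 1)⁻¹ *
      Real.log (α.toReal * tr2 ρ ω + (1 - α.toReal) * tr2 σ (mpow ω (α.toReal / (α.toReal - 1))))
  else
    (α.toReal - 1)⁻¹ *
      Real.log (α.toReal * tr2 ρ (mpow ω ((α.toReal - 1) / α.toReal)) + (1 - α.toReal) * tr2 σ ω)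

section Bipartite

variable (a b : Type) [Fintype a] [DecidableEq a] [Fintype b] [DecidableEq b]

/-- A family of mutually orthogonal orthogonal projections summing to the identity. -/
def IsOrthProjFamily {ι : Type} [Fintype ι] {m : Type} [Fintype m] [DecidableEq m]
    (P : ι → Matrix m m ℂ) : Prop :=
  (∀ x, (P x).IsHermitian) ∧ (∀ x, P x * P x = P x) ∧
    (∀ x y, x ≠ y → P x * P y = 0) ∧ ∑ x, P x = 1

/-- The class `P-LO(A:B)` of local projective measurements. -/
def PLO : Set (POVM (a × b)) :=
  { M | ∃ (X Y : Type) (_ : Fintype X) (_ : Fintype Y)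
      (PA : X → Matrix a a ℂ) (PB : Y → Matrix b b ℂ) (e : M.ι ≃ X × Y),
      IsOrthProjFamily PA ∧ IsOrthProjFamily PB ∧
      ∀ z, M.elem z = PA (e z).1 ⊗ₖ PB (e z).2 }

/-- The class `LO(A:B)` of local measurements. -/
def LO : Set (POVM (a × b)) :=
  { M | ∃ (MA : POVM a) (MB : POVM b) (e : M.ι ≃ MA.ι × MB.ι),
      ∀ z, M.elem z = MA.elem (e z).1 ⊗ₖ MB.elem (e z).2 }

/-- The partial transpose (transposition of the `B` tensor factor). -/
def ptrans {a b : Type} (X : Matrix (a × b) (a × b) ℂ) : Matrix (a × b) (a × b) ℂ :=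
  Matrix.of fun x y => X (x.1, y.2) (y.1, x.2)

/-- Separable (positive semidefinite) operators: finite sums of tensor products of positive
semidefinite operators. -/
def SepMat {a b : Type} [Fintype a] [DecidableEq a] [Fintype b] [DecidableEq b]
    (ω : Matrix (a × b) (a × b) ℂ) : Prop :=
  ∃ (k : ℕ) (X : Fin k → Matrix a a ℂ) (Y : Fin k → Matrix b b ℂ),
    (∀ z, (X z).PosSemidef) ∧ (∀ z, (Y z).PosSemidef) ∧ ω = ∑ z, X z ⊗ₖ Y z

/-- The class `SEP(A:B)`: POVMs all of whose elements are separable. -/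
def SEP : Set (POVM (a × b)) := { M | ∀ z, SepMat (M.elem z) }

/-- The class `PPT(A:B)`: POVMs all of whose elements have positive semidefinite
partial transpose. -/
def PPT : Set (POVM (a × b)) := { M | ∀ z, (ptrans (M.elem z)).PosSemidef }

end Bipartite

/-- The maximally entangled state `Φ` on `ℂ^d ⊗ ℂ^d`. -/
def maxEnt (d : ℕ) : Matrix (Fin d × Fin d) (Fin d × Fin d) ℂ :=
  Matrix.of fun x y => if x.1 = x.2 ∧ y.1 = y.2 then ((d : ℂ))⁻¹ else 0

/-- The orthogonal complement `Φ⊥ = (1 - Φ)/(d² - 1)`. -/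
def maxEntPerp (d : ℕ) : Matrix (Fin d × Fin d) (Fin d × Fin d) ℂ :=
  ((d : ℂ) ^ 2 - 1)⁻¹ • (1 - maxEnt d)

/-- The isotropic state `i(q) = q Φ + (1 - q) Φ⊥`. -/
def iso (d : ℕ) (q : ℝ) : Matrix (Fin d × Fin d) (Fin d × Fin d) ℂ :=
  (q : ℂ) • maxEnt d + ((1 - q : ℝ) : ℂ) • maxEntPerp d

/-- The `n`-fold tensor (Kronecker) power of a matrix on `ℂ^d`. -/
def tpow {d : ℕ} (ρ : Matrix (Fin d) (Fin d) ℂ) (n : ℕ) :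
    Matrix (Fin n → Fin d) (Fin n → Fin d) ℂ :=
  Matrix.of fun x y => ∏ i, ρ (x i) (y i)

/-- The `n`-fold tensor power of a bipartite matrix on `ℂ^d ⊗ ℂ^d`, written on
`((ℂ^d)^{⊗n})_A ⊗ ((ℂ^d)^{⊗n})_B`, i.e. with all `A`-factors grouped into one block and all
`B`-factors into the other. -/
def tpowBip {d : ℕ} (ρ : Matrix (Fin d × Fin d) (Fin d × Fin d) ℂ) (n : ℕ) :
    Matrix ((Fin n → Fin d) × (Fin n → Fin d)) ((Fin n → Fin d) × (Fin n → Fin d)) ℂ :=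
  Matrix.of fun x y => ∏ i, ρ (x.1 i, x.2 i) (y.1 i, y.2 i)

/-- The tensor product of a matrix on `(ℂ^d)^{⊗k}` and a matrix on `(ℂ^d)^{⊗l}`, as a matrix
on `(ℂ^d)^{⊗(k+l)}`. -/
def prodElem {d k l : ℕ} (A : Matrix (Fin k → Fin d) (Fin k → Fin d) ℂ)
    (B : Matrix (Fin l → Fin d) (Fin l → Fin d) ℂ) :
    Matrix (Fin (k + l) → Fin d) (Fin (k + l) → Fin d) ℂ :=
  Matrix.of fun x y =>
    A (fun i => x (Fin.castAdd l i)) (fun i => y (Fin.castAdd l i)) *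
      B (fun j => x (Fin.natAdd k j)) (fun j => y (Fin.natAdd k j))

/-- A family `(ℳ_n)_n` of measurement sets is closed under tensor products if for all
`M_k ∈ ℳ_k` and `M_l ∈ ℳ_l` the product POVM `M_k ⊗ M_l` belongs to `ℳ_{k+l}`. -/
def TensorClosed {d : ℕ} (𝓜 : ∀ m : ℕ, Set (POVM (Fin m → Fin d))) : Prop :=
  ∀ k l : ℕ, ∀ Mk ∈ 𝓜 k, ∀ Ml ∈ 𝓜 l,
    ∃ M ∈ 𝓜 (k + l), ∃ e : Mk.ι × Ml.ι ≃ M.ι,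
      ∀ z, M.elem (e z) = prodElem (Mk.elem z.1) (Ml.elem z.2)

/-- `T` is a test available in the measurement set `𝓝`: `0 ≤ T ≤ 1` and the binary POVM
`{T, 1 - T}` belongs to `𝓝`. -/
def IsTest {m : Type} [Fintype m] [DecidableEq m] (𝓝 : Set (POVM m)) (T : Matrix m m ℂ) : Prop :=
  T.PosSemidef ∧ (1 - T).PosSemidef ∧
    ∃ M ∈ 𝓝, ∃ e : M.ι ≃ Bool, M.elem (e.symm true) = T ∧ M.elem (e.symm false) = 1 - T

/-- Extended-real logarithm of a real number: `-∞` on `(-∞,0]`. -/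
def elogr (x : ℝ) : EReal := if x ≤ 0 then ⊥ else ((Real.log x : ℝ) : EReal)

/-- Extended-real logarithm on `EReal`. -/
def elog (x : EReal) : EReal :=
  if x ≤ 0 then ⊥ else if x = ⊤ then ⊤ else ((Real.log x.toReal : ℝ) : EReal)


/-- Extra: the action of `id_m ⊗ 𝒢` on block matrices (for complete positivity). -/
def blockApply {d : ℕ} (𝒢 : Matrix (Fin d) (Fin d) ℂ →ₗ[ℂ] Matrix (Fin d) (Fin d) ℂ) (m : ℕ)
    (X : Matrix (Fin m × Fin d) (Fin m × Fin d) ℂ) : Matrix (Fin m × Fin d) (Fin m × Fin d) ℂ :=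
  Matrix.of fun p q => 𝒢 (Matrix.of fun s t => X (p.1, s) (q.1, t)) p.2 q.2


/- ======================= Auxiliary lemmas ======================= -/

section Helpers

set_option linter.unusedSectionVars false

variable {m : Type} [Fintype m] [DecidableEq m]

lemma psd_smul_real {M : Matrix m m ℂ} (hM : M.PosSemidef) {c : ℝ} (hc : 0 ≤ c) :
    ((c : ℂ) • M).PosSemidef := by
  refine Matrix.posSemidef_iff_dotProduct_mulVec.mpr ⟨?_, ?_⟩
  · show ((c : ℂ) • M).conjTranspose = _
    rw [Matrix.conjTranspose_smul, hM.1.eq]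
    congr 1
    simp
  · intro x
    rw [Matrix.smul_mulVec, dotProduct_smul, smul_eq_mul]
    exact mul_nonneg (by exact_mod_cast hc) (hM.dotProduct_mulVec_nonneg x)

lemma posdef_smul_one {c : ℝ} (hc : 0 < c) : ((c : ℂ) • (1 : Matrix m m ℂ)).PosDef := by
  rw [Matrix.smul_one_eq_diagonal]
  exact Matrix.PosDef.diagonal fun _ => Complex.zero_lt_real.mpr hc

lemma psd_trace_re_nonneg {M : Matrix m m ℂ} (hM : M.PosSemidef) : 0 ≤ M.trace.re := by
  rw [Matrix.trace]
  have key : ∀ i : m, 0 ≤ (M i i).re := by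
    intro i
    have h := hM.dotProduct_mulVec_nonneg (Pi.single i 1)
    have heq : star (Pi.single i 1 : m → ℂ) ⬝ᵥ M *ᵥ Pi.single i 1 = M i i := by
      simp [Matrix.mulVec_single, dotProduct, Pi.single_apply, Finset.sum_ite_eq']
    rw [heq] at h
    exact (Complex.le_def.mp h).1
  calc (0:ℝ) ≤ ∑ i, (M i i).re := Finset.sum_nonneg fun i _ => key i
    _ = (∑ i, Matrix.diag M i : ℂ).re := by rw [Complex.re_sum]; rfl

lemma tr2_nonneg {A B : Matrix m m ℂ} (hA : A.PosSemidef) (hB : B.PosSemidef) :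
    0 ≤ tr2 A B := by
  obtain ⟨S, hS⟩ : ∃ S : Matrix m m ℂ, B = star S * S := by
    open scoped MatrixOrder in
    exact CStarAlgebra.nonneg_iff_eq_star_mul_self.mp hB.nonneg
  have h1 : (A * B).trace = (S * A * star S).trace := by
    rw [hS, ← Matrix.mul_assoc, Matrix.trace_mul_cycle]
  have h2 : (S * A * star S).PosSemidef := by
    have := hA.mul_mul_conjTranspose_same S
    rwa [← Matrix.star_eq_conjTranspose] at this
  rw [tr2, h1]
  exact psd_trace_re_nonneg h2

lemma tr2_add_right (A B C : Matrix m m ℂ) : tr2 A (B + C) = tr2 A B + tr2 A C := by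
  simp [tr2, Matrix.mul_add, Matrix.trace_add]

lemma tr2_sub_right (A B C : Matrix m m ℂ) : tr2 A (B - C) = tr2 A B - tr2 A C := by
  simp [tr2, Matrix.mul_sub, Matrix.trace_sub]

lemma tr2_smul_right (A B : Matrix m m ℂ) (c : ℝ) : tr2 A ((c : ℂ) • B) = c * tr2 A B := by
  simp [tr2, Matrix.mul_smul, Matrix.trace_smul, Complex.smul_re]

lemma tr2_one_right {A : Matrix m m ℂ} (h1 : A.trace = 1) : tr2 A 1 = 1 := by
  simp [tr2, h1]

lemma unitary_conj_psd {U : Matrix m m ℂ} (hU : U ∈ Matrix.unitaryGroup m ℂ)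
    {D : Matrix m m ℂ} (hD : D.PosSemidef) : (U * D * star U).PosSemidef := by
  have := hD.mul_mul_conjTranspose_same U
  rwa [← Matrix.star_eq_conjTranspose] at this

lemma spectral_sub_one {A : Matrix m m ℂ} (hH : A.IsHermitian) (c : ℝ) :
    (1 : Matrix m m ℂ) - (c : ℂ) • A =
      (hH.eigenvectorUnitary : Matrix m m ℂ) *
        Matrix.diagonal (fun i => ((1 - c * hH.eigenvalues i : ℝ) : ℂ)) *
        star (hH.eigenvectorUnitary : Matrix m m ℂ) := by
  set U : Matrix m m ℂ := (hH.eigenvectorUnitary : Matrix m m ℂ)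
  have hU : U * star U = 1 := Matrix.mem_unitaryGroup_iff.mp hH.eigenvectorUnitary.2
  have hdiag : Matrix.diagonal (fun i => ((1 - c * hH.eigenvalues i : ℝ) : ℂ)) =
      1 - (c : ℂ) • Matrix.diagonal (RCLike.ofReal ∘ hH.eigenvalues) := by
    ext i j
    rcases eq_or_ne i j with rfl | h
    · simp only [Matrix.diagonal_apply_eq, Matrix.sub_apply, Matrix.one_apply_eq,
        Matrix.smul_apply, Function.comp_apply, smul_eq_mul, RCLike.ofReal_alg]
      push_cast [Complex.real_smul]
      ring
    · simp [Matrix.diagonal_apply_ne _ h, Matrix.one_apply_ne h]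
  rw [hdiag, Matrix.mul_sub, Matrix.mul_one, Matrix.mul_smul, Matrix.sub_mul, Matrix.smul_mul,
    hU]
  exact congrArg (fun X => 1 - (c : ℂ) • X) hH.spectral_theorem

lemma exists_one_sub_smul_psd {A : Matrix m m ℂ} (hA : A.PosSemidef) :
    ∃ c : ℝ, 0 < c ∧ ((1 : Matrix m m ℂ) - (c : ℂ) • A).PosSemidef := by
  set t : ℝ := ∑ i, hA.1.eigenvalues i with ht
  have ht0 : 0 ≤ t := Finset.sum_nonneg fun i _ => hA.eigenvalues_nonneg i
  refine ⟨(t + 1)⁻¹, by positivity, ?_⟩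
  rw [spectral_sub_one hA.1]
  refine unitary_conj_psd hA.1.eigenvectorUnitary.2 ?_
  refine Matrix.posSemidef_diagonal_iff.mpr fun i => ?_
  rw [Complex.zero_le_real, sub_nonneg]
  have hle : hA.1.eigenvalues i ≤ t :=
    Finset.single_le_sum (fun j _ => hA.eigenvalues_nonneg j) (Finset.mem_univ i)
  calc (t + 1)⁻¹ * hA.1.eigenvalues i ≤ (t + 1)⁻¹ * (t + 1) := by
        apply mul_le_mul_of_nonneg_left (by linarith) (by positivity)
    _ = 1 := by rw [inv_mul_cancel₀ (by positivity)]

lemma one_sub_smul_psd_mono {A : Matrix m m ℂ} (hA : A.PosSemidef) {c c' : ℝ}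
    (h : ((1 : Matrix m m ℂ) - (c : ℂ) • A).PosSemidef) (h0 : 0 ≤ c') (h1 : c' ≤ c) :
    ((1 : Matrix m m ℂ) - (c' : ℂ) • A).PosSemidef := by
  have key : (1 : Matrix m m ℂ) - (c' : ℂ) • A =
      ((1 : Matrix m m ℂ) - (c : ℂ) • A) + ((c - c' : ℝ) : ℂ) • A := by
    push_cast
    rw [sub_smul]
    abel
  rw [key]
  exact h.add (psd_smul_real hA (by linarith))

lemma exists_smul_one_le_posdef [Nonempty m] {A : Matrix m m ℂ} (hA : A.PosDef) :
    ∃ ε : ℝ, 0 < ε ∧ (A - (ε : ℂ) • (1 : Matrix m m ℂ)).PosSemidef := by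
  have hH := hA.1
  obtain ⟨i0, -, hi0⟩ := Finset.exists_mem_eq_inf' (Finset.univ_nonempty) hH.eigenvalues
  refine ⟨Finset.univ.inf' Finset.univ_nonempty hH.eigenvalues, ?_, ?_⟩
  · rw [hi0]; exact hA.eigenvalues_pos i0
  set ε : ℝ := Finset.univ.inf' Finset.univ_nonempty hH.eigenvalues with hε
  have key : A - (ε : ℂ) • (1 : Matrix m m ℂ) =
      (hH.eigenvectorUnitary : Matrix m m ℂ) *
        Matrix.diagonal (fun i => ((hH.eigenvalues i - ε : ℝ) : ℂ)) *
        star (hH.eigenvectorUnitary : Matrix m m ℂ) := by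
    set U : Matrix m m ℂ := (hH.eigenvectorUnitary : Matrix m m ℂ)
    have hU : U * star U = 1 := Matrix.mem_unitaryGroup_iff.mp hH.eigenvectorUnitary.2
    have hdiag : Matrix.diagonal (fun i => ((hH.eigenvalues i - ε : ℝ) : ℂ)) =
        Matrix.diagonal (RCLike.ofReal ∘ hH.eigenvalues) - (ε : ℂ) • 1 := by
      ext i j
      rcases eq_or_ne i j with rfl | h
      · simp only [Matrix.diagonal_apply_eq, Matrix.sub_apply, Matrix.one_apply_eq,
          Matrix.smul_apply, Function.comp_apply, smul_eq_mul, RCLike.ofReal_alg]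
        push_cast [Complex.real_smul]
        ring
      · simp [Matrix.diagonal_apply_ne _ h, Matrix.one_apply_ne h]
    rw [hdiag, Matrix.mul_sub, Matrix.mul_smul, Matrix.mul_one, Matrix.sub_mul, Matrix.smul_mul,
      hU]
    exact congrArg (fun X => X - (ε : ℂ) • 1) hH.spectral_theorem
  rw [key]
  exact unitary_conj_psd hH.eigenvectorUnitary.2 <|
    Matrix.posSemidef_diagonal_iff.mpr fun i => by
      rw [Complex.zero_le_real, sub_nonneg, hε]
      exact Finset.inf'_le _ (Finset.mem_univ i)

lemma tr2_posdef_pos [Nonempty m] {σ ω : Matrix m m ℂ} (hσ : σ.PosSemidef) (hσ1 : σ.trace = 1)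
    (hω : ω.PosDef) : 0 < tr2 σ ω := by
  obtain ⟨ε, hε, hsub⟩ := exists_smul_one_le_posdef hω
  have h1 : tr2 σ ω = tr2 σ (ω - (ε : ℂ) • 1) + ε := by
    rw [tr2_sub_right, tr2_smul_right, tr2_one_right hσ1]
    ring
  have h2 := tr2_nonneg hσ hsub
  rw [h1]
  linarith

/-- The two-outcome POVM `{T, 1 - T}`. -/
def testPOVM (T : Matrix m m ℂ) (h1 : T.PosSemidef)
    (h2 : ((1 : Matrix m m ℂ) - T).PosSemidef) : POVM m where
  ι := Bool
  elem := fun z => if z then T else 1 - T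
  pos := fun z => by
    cases z
    · simpa using h2
    · simpa using h1
  sum_one := by
    rw [Fintype.sum_bool]
    simp

end Helpers

section KeyLemma

open scoped Topology

set_option linter.unusedSectionVars false

variable {m : Type} [Fintype m] [DecidableEq m]

lemma key_variational [Nonempty m] (𝓜 : Set (POVM m)) (P : Matrix m m ℂ → Prop)
    (hMP : ∀ M ∈ 𝓜, ∀ z, P (M.elem z))
    (hpert : ∀ ω : Matrix m m ℂ, P ω → ∀ ε : ℝ, 0 < ε → P (ω + (ε : ℂ) • 1))
    (hPOVM : ∀ ω : Matrix m m ℂ, ω.PosDef → P ω →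
      ∃ c : ℝ, 0 < c ∧ ∃ M ∈ 𝓜, ∃ z : M.ι, M.elem z = (c : ℂ) • ω)
    (ρ σ : Matrix m m ℂ) (hρ : ρ.PosSemidef) (hρ1 : ρ.trace = 1)
    (hσ : σ.PosSemidef) (hσ1 : σ.trace = 1) :
    mrdiv 𝓜 ⊤ ρ σ = ⨆ ω ∈ {ω : Matrix m m ℂ | ω.PosDef ∧ P ω},
      ((Real.log (tr2 ρ ω / tr2 σ ω) : ℝ) : EReal) := by
  apply le_antisymm
  · unfold mrdiv
    refine iSup₂_le fun M hM => ?_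
    have hrd : rdiv (⊤ : EReal) (M.dist ρ) (M.dist σ) = Dmax (M.dist ρ) (M.dist σ) := if_pos rfl
    rw [hrd]
    unfold Dmax
    refine iSup_le fun zz => ?_
    obtain ⟨z, hz⟩ := zz
    have hz' : tr2 ρ (M.elem z) ≠ 0 := hz
    have hμ : 0 < tr2 ρ (M.elem z) :=
      lt_of_le_of_ne (tr2_nonneg hρ (M.pos z)) (Ne.symm hz')
    have hν0 : 0 ≤ tr2 σ (M.elem z) := tr2_nonneg hσ (M.pos z)
    have helem : ∀ ε : ℝ, 0 < ε →
        ((Real.log ((tr2 ρ (M.elem z) + ε) / (tr2 σ (M.elem z) + ε)) : ℝ) : EReal) ≤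
          ⨆ ω ∈ {ω : Matrix m m ℂ | ω.PosDef ∧ P ω},
            ((Real.log (tr2 ρ ω / tr2 σ ω) : ℝ) : EReal) := by
      intro ε hε
      have hmem : (M.elem z + (ε : ℂ) • 1) ∈ {ω : Matrix m m ℂ | ω.PosDef ∧ P ω} :=
        ⟨Matrix.PosDef.posSemidef_add (M.pos z) (posdef_smul_one hε),
          hpert _ (hMP M hM z) ε hε⟩
      have hvρ : tr2 ρ (M.elem z + (ε : ℂ) • 1) = tr2 ρ (M.elem z) + ε := by
        rw [tr2_add_right, tr2_smul_right, tr2_one_right hρ1, mul_one]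
      have hvσ : tr2 σ (M.elem z + (ε : ℂ) • 1) = tr2 σ (M.elem z) + ε := by
        rw [tr2_add_right, tr2_smul_right, tr2_one_right hσ1, mul_one]
      have := le_iSup₂ (f := fun (ω : Matrix m m ℂ) (_ : ω ∈ {ω : Matrix m m ℂ | ω.PosDef ∧ P ω}) =>
        ((Real.log (tr2 ρ ω / tr2 σ ω) : ℝ) : EReal)) (M.elem z + (ε : ℂ) • 1) hmem
      rwa [hvρ, hvσ] at this
    rcases eq_or_lt_of_le hν0 with hν | hν
    · have hν' : M.dist σ z = 0 := hν.symm
      rw [if_pos hν', top_le_iff, EReal.eq_top_iff_forall_lt]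
      intro y
      set ε : ℝ := tr2 ρ (M.elem z) * Real.exp (-(y + 1)) with hεdef
      have hε : 0 < ε := mul_pos hμ (Real.exp_pos _)
      have hfrac : tr2 ρ (M.elem z) / ε ≤
          (tr2 ρ (M.elem z) + ε) / (tr2 σ (M.elem z) + ε) := by
        rw [← hν, zero_add]
        gcongr
        linarith
      have hlogμε : Real.log (tr2 ρ (M.elem z) / ε) = y + 1 := by
        rw [Real.log_div hμ.ne' hε.ne', hεdef,
          Real.log_mul hμ.ne' (Real.exp_ne_zero _), Real.log_exp]
        ring
      have hstep : y + 1 ≤ Real.log ((tr2 ρ (M.elem z) + ε) / (tr2 σ (M.elem z) + ε)) := by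
        rw [← hlogμε]
        exact Real.log_le_log (by positivity) hfrac
      refine lt_of_lt_of_le ?_ (helem ε hε)
      exact_mod_cast (by linarith : y < Real.log ((tr2 ρ (M.elem z) + ε) / (tr2 σ (M.elem z) + ε)))
    · have hν' : ¬ M.dist σ z = 0 := hν.ne'
      rw [if_neg hν']
      have hg : Tendsto (fun k : ℕ => Real.log ((tr2 ρ (M.elem z) + 1 / ((k : ℝ) + 1)) /
          (tr2 σ (M.elem z) + 1 / ((k : ℝ) + 1)))) atTop
          (𝓝 (Real.log (tr2 ρ (M.elem z) / tr2 σ (M.elem z)))) := by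
        have h0 : Tendsto (fun k : ℕ => 1 / ((k : ℝ) + 1)) atTop (𝓝 0) :=
          tendsto_one_div_add_atTop_nhds_zero_nat
        have hμt : Tendsto (fun k : ℕ => tr2 ρ (M.elem z) + 1 / ((k : ℝ) + 1)) atTop
            (𝓝 (tr2 ρ (M.elem z))) := by
          simpa using h0.const_add (tr2 ρ (M.elem z))
        have hνt : Tendsto (fun k : ℕ => tr2 σ (M.elem z) + 1 / ((k : ℝ) + 1)) atTop
            (𝓝 (tr2 σ (M.elem z))) := by
          simpa using h0.const_add (tr2 σ (M.elem z))
        exact (hμt.div hνt hν.ne').log (div_pos hμ hν).ne'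
      refine le_of_tendsto (EReal.tendsto_coe.mpr hg) (Eventually.of_forall fun k => ?_)
      exact helem (1 / ((k : ℝ) + 1)) (by positivity)
  · refine iSup₂_le fun ω hω => ?_
    obtain ⟨hPD, hP⟩ := hω
    obtain ⟨c, hc, M, hM, z, hz⟩ := hPOVM ω hPD hP
    have hρω : 0 < tr2 ρ ω := tr2_posdef_pos hρ hρ1 hPD
    have hσω : 0 < tr2 σ ω := tr2_posdef_pos hσ hσ1 hPD
    unfold mrdiv
    refine le_iSup₂_of_le M hM ?_
    have hrd : rdiv (⊤ : EReal) (M.dist ρ) (M.dist σ) = Dmax (M.dist ρ) (M.dist σ) := if_pos rfl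
    rw [hrd]
    unfold Dmax
    have hzρ : M.dist ρ z ≠ 0 := by
      show tr2 ρ (M.elem z) ≠ 0
      rw [hz, tr2_smul_right]
      positivity
    refine le_trans ?_ (le_iSup _ (⟨z, hzρ⟩ : {z : M.ι // M.dist ρ z ≠ 0}))
    have hzσ : M.dist σ z = c * tr2 σ ω := by
      show tr2 σ (M.elem z) = _
      rw [hz, tr2_smul_right]
    have hzρ' : M.dist ρ z = c * tr2 ρ ω := by
      show tr2 ρ (M.elem z) = _
      rw [hz, tr2_smul_right]
    have hνne : ¬ M.dist σ (⟨z, hzρ⟩ : {z : M.ι // M.dist ρ z ≠ 0}).1 = 0 := by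
      rw [hzσ]
      positivity
    rw [if_neg hνne]
    have : M.dist ρ z / M.dist σ z = tr2 ρ ω / tr2 σ ω := by
      rw [hzρ', hzσ, mul_div_mul_left _ _ hc.ne']
    rw [this]

end KeyLemma

section Instantiations

set_option linter.unusedSectionVars false

variable {a b : Type} [Fintype a] [DecidableEq a] [Fintype b] [DecidableEq b]

lemma kron_conjTranspose (A : Matrix a a ℂ) (B : Matrix b b ℂ) :
    (A ⊗ₖ B)ᴴ = Aᴴ ⊗ₖ Bᴴ := by
  ext ⟨i, j⟩ ⟨k, l⟩
  simp [Matrix.conjTranspose_apply, Matrix.kroneckerMap_apply]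

lemma psd_kron {X : Matrix a a ℂ} {Y : Matrix b b ℂ} (hX : X.PosSemidef) (hY : Y.PosSemidef) :
    (X ⊗ₖ Y).PosSemidef := by
  exact hX.kronecker hY

lemma sepMat_zero : SepMat (0 : Matrix (a × b) (a × b) ℂ) :=
  ⟨0, fun _ => 0, fun _ => 0, fun z => z.elim0, fun z => z.elim0, by simp⟩

lemma sepMat_kron {X : Matrix a a ℂ} {Y : Matrix b b ℂ} (hX : X.PosSemidef) (hY : Y.PosSemidef) :
    SepMat (X ⊗ₖ Y) :=
  ⟨1, fun _ => X, fun _ => Y, fun _ => hX, fun _ => hY, by simp⟩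

lemma sepMat_one : SepMat (1 : Matrix (a × b) (a × b) ℂ) := by
  rw [← Matrix.one_kronecker_one]
  exact sepMat_kron Matrix.PosSemidef.one Matrix.PosSemidef.one

lemma sepMat_add {ω₁ ω₂ : Matrix (a × b) (a × b) ℂ} (h1 : SepMat ω₁) (h2 : SepMat ω₂) :
    SepMat (ω₁ + ω₂) := by
  obtain ⟨k1, X1, Y1, hX1, hY1, rfl⟩ := h1
  obtain ⟨k2, X2, Y2, hX2, hY2, rfl⟩ := h2
  refine ⟨k1 + k2, Fin.append X1 X2, Fin.append Y1 Y2, ?_, ?_, ?_⟩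
  · exact fun z => Fin.addCases (fun i => by rw [Fin.append_left]; exact hX1 i)
      (fun i => by rw [Fin.append_right]; exact hX2 i) z
  · exact fun z => Fin.addCases (fun i => by rw [Fin.append_left]; exact hY1 i)
      (fun i => by rw [Fin.append_right]; exact hY2 i) z
  · rw [Fin.sum_univ_add]
    simp [Fin.append_left, Fin.append_right]

lemma sepMat_sum {k : ℕ} (f : Fin k → Matrix (a × b) (a × b) ℂ) (h : ∀ z, SepMat (f z)) :
    SepMat (∑ z, f z) :=
  Finset.sum_induction f SepMat (fun _ _ hx hy => sepMat_add hx hy) sepMat_zero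
    (fun i _ => h i)

lemma sepMat_smul {ω : Matrix (a × b) (a × b) ℂ} (h : SepMat ω) {c : ℝ} (hc : 0 ≤ c) :
    SepMat ((c : ℂ) • ω) := by
  obtain ⟨k, X, Y, hX, hY, rfl⟩ := h
  refine ⟨k, fun z => (c : ℂ) • X z, Y, fun z => psd_smul_real (hX z) hc, hY, ?_⟩
  rw [Finset.smul_sum]
  exact Finset.sum_congr rfl fun z _ => by rw [Matrix.smul_kronecker]

lemma sepMat_posSemidef {ω : Matrix (a × b) (a × b) ℂ} (h : SepMat ω) : ω.PosSemidef := by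
  obtain ⟨k, X, Y, hX, hY, rfl⟩ := h
  exact Finset.sum_induction _ _ (fun _ _ hx hy => hx.add hy) Matrix.PosSemidef.zero
    (fun i _ => psd_kron (hX i) (hY i))

lemma sepMat_one_sub_kron {X : Matrix a a ℂ} {Y : Matrix b b ℂ}
    (hX : X.PosSemidef) (hY : Y.PosSemidef)
    (hX1 : ((1 : Matrix a a ℂ) - X).PosSemidef) (hY1 : ((1 : Matrix b b ℂ) - Y).PosSemidef) :
    SepMat ((1 : Matrix (a × b) (a × b) ℂ) - X ⊗ₖ Y) := by
  have key : (1 : Matrix (a × b) (a × b) ℂ) - X ⊗ₖ Y =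
      ((1 : Matrix a a ℂ) - X) ⊗ₖ Y + (1 : Matrix a a ℂ) ⊗ₖ ((1 : Matrix b b ℂ) - Y) := by
    ext ⟨i, j⟩ ⟨k, l⟩
    by_cases hik : i = k <;> by_cases hjl : j = l <;>
      simp [Matrix.kroneckerMap_apply, Matrix.one_apply, Matrix.sub_apply, Prod.ext_iff,
        hik, hjl] <;> ring
  rw [key]
  exact sepMat_add (sepMat_kron hX1 hY) (sepMat_kron Matrix.PosSemidef.one hY1)

lemma ptrans_add (X Y : Matrix (a × b) (a × b) ℂ) :
    ptrans (X + Y) = ptrans X + ptrans Y := by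
  ext ⟨i, j⟩ ⟨k, l⟩; simp [ptrans]

lemma ptrans_sub (X Y : Matrix (a × b) (a × b) ℂ) :
    ptrans (X - Y) = ptrans X - ptrans Y := by
  ext ⟨i, j⟩ ⟨k, l⟩; simp [ptrans]

lemma ptrans_smul (c : ℂ) (X : Matrix (a × b) (a × b) ℂ) :
    ptrans (c • X) = c • ptrans X := by
  ext ⟨i, j⟩ ⟨k, l⟩; simp [ptrans]

lemma ptrans_one : ptrans (1 : Matrix (a × b) (a × b) ℂ) = 1 := by
  ext ⟨i, j⟩ ⟨k, l⟩
  by_cases hik : i = k <;> by_cases hjl : j = l <;>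
    simp [ptrans, Matrix.one_apply, Prod.ext_iff, hik, hjl, eq_comm]

lemma sep_build (ω : Matrix (a × b) (a × b) ℂ) (hPD : ω.PosDef) (hsep : SepMat ω) :
    ∃ c : ℝ, 0 < c ∧ ∃ M ∈ SEP a b, ∃ z : M.ι, M.elem z = (c : ℂ) • ω := by
  obtain ⟨k, X, Y, hX, hY, hωeq⟩ := hsep
  choose t ht hXt using fun z => exists_one_sub_smul_psd (hX z)
  choose s hs hYt using fun z => exists_one_sub_smul_psd (hY z)
  set G : ℝ := ∑ z, (t z * s z)⁻¹ with hG
  have hG0 : 0 ≤ G :=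
    Finset.sum_nonneg fun z _ => by have := ht z; have := hs z; positivity
  set c : ℝ := (G + 1)⁻¹ with hc
  have hc0 : 0 < c := by rw [hc]; positivity
  set r : Fin k → ℝ := fun z => c * (t z * s z)⁻¹ with hr
  have hr0 : ∀ z, 0 ≤ r z := fun z => by
    have := ht z; have := hs z
    rw [hr]
    positivity
  have hkey : ∀ z, ((r z : ℝ) : ℂ) • ((1 : Matrix (a × b) (a × b) ℂ) -
      ((t z : ℂ) • X z) ⊗ₖ ((s z : ℂ) • Y z)) =
      ((r z : ℝ) : ℂ) • 1 - (c : ℂ) • (X z ⊗ₖ Y z) := by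
    intro z
    rw [Matrix.smul_kronecker, Matrix.kronecker_smul, smul_smul, smul_sub, smul_smul]
    have hcoef : (r z : ℂ) * ((t z : ℂ) * (s z : ℂ)) = (c : ℂ) := by
      have hts : t z * s z ≠ 0 := by
        have := ht z; have := hs z; positivity
      have hreal : r z * (t z * s z) = c := by
        rw [hr, mul_assoc, inv_mul_cancel₀ hts, mul_one]
      calc (r z : ℂ) * ((t z : ℂ) * (s z : ℂ)) = ((r z * (t z * s z) : ℝ) : ℂ) := by
            push_cast; ring
        _ = (c : ℂ) := by rw [hreal]
    rw [hcoef]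
  have hsum : (1 : Matrix (a × b) (a × b) ℂ) - (c : ℂ) • ω =
      (∑ z, ((r z : ℝ) : ℂ) • ((1 : Matrix (a × b) (a × b) ℂ) -
        ((t z : ℂ) • X z) ⊗ₖ ((s z : ℂ) • Y z))) + ((1 - c * G : ℝ) : ℂ) • 1 := by
    rw [Finset.sum_congr rfl (fun z _ => hkey z), Finset.sum_sub_distrib, ← Finset.sum_smul,
      ← Finset.smul_sum, ← hωeq]
    have hrs : (∑ z, ((r z : ℝ) : ℂ)) = ((c * G : ℝ) : ℂ) := by
      have : ∑ z, r z = c * G := by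
        rw [hG, Finset.mul_sum]
      rw [← this]
      push_cast
      ring
    rw [hrs, sub_add_eq_add_sub, ← add_smul]
    have hcoef : ((c * G : ℝ) : ℂ) + ((1 - c * G : ℝ) : ℂ) = 1 := by
      push_cast; ring
    rw [hcoef, one_smul]
  have hleft : 0 ≤ 1 - c * G := by
    have h1 : c * (G + 1) = 1 := inv_mul_cancel₀ (by positivity)
    have h2 : c * G + c = 1 := by rw [← h1]; ring
    linarith
  have hcomp : SepMat ((1 : Matrix (a × b) (a × b) ℂ) - (c : ℂ) • ω) := by
    rw [hsum]
    refine sepMat_add (sepMat_sum _ fun z => sepMat_smul ?_ (hr0 z)) (sepMat_smul sepMat_one hleft)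
    exact sepMat_one_sub_kron (psd_smul_real (hX z) (ht z).le) (psd_smul_real (hY z) (hs z).le)
      (hXt z) (hYt z)
  have hsep' : SepMat ω := ⟨k, X, Y, hX, hY, hωeq⟩
  refine ⟨c, hc0, testPOVM ((c : ℂ) • ω) (psd_smul_real hPD.posSemidef hc0.le)
    (sepMat_posSemidef hcomp), ?_, true, by simp [testPOVM]⟩
  intro z
  cases z
  · simpa [testPOVM] using hcomp
  · simpa [testPOVM] using sepMat_smul hsep' hc0.le

lemma ppt_build (ω : Matrix (a × b) (a × b) ℂ) (hPD : ω.PosDef)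
    (hPT : (ptrans ω).PosSemidef) :
    ∃ c : ℝ, 0 < c ∧ ∃ M ∈ PPT a b, ∃ z : M.ι, M.elem z = (c : ℂ) • ω := by
  obtain ⟨c1, hc1, h1⟩ := exists_one_sub_smul_psd hPD.posSemidef
  obtain ⟨c2, hc2, h2⟩ := exists_one_sub_smul_psd hPT
  set c : ℝ := min c1 c2 with hcdef
  have hc : 0 < c := lt_min hc1 hc2
  have hω1 : ((1 : Matrix (a × b) (a × b) ℂ) - (c : ℂ) • ω).PosSemidef :=
    one_sub_smul_psd_mono hPD.posSemidef h1 hc.le (min_le_left _ _)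
  have hω2 : ((1 : Matrix (a × b) (a × b) ℂ) - (c : ℂ) • ptrans ω).PosSemidef :=
    one_sub_smul_psd_mono hPT h2 hc.le (min_le_right _ _)
  refine ⟨c, hc, testPOVM ((c : ℂ) • ω) (psd_smul_real hPD.posSemidef hc.le) hω1, ?_,
    true, by simp [testPOVM]⟩
  intro z
  have hfalse : (testPOVM ((c : ℂ) • ω) (psd_smul_real hPD.posSemidef hc.le) hω1).elem false
      = (1 : Matrix (a × b) (a × b) ℂ) - (c : ℂ) • ω := by simp [testPOVM]
  have htrue : (testPOVM ((c : ℂ) • ω) (psd_smul_real hPD.posSemidef hc.le) hω1).elem true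
      = (c : ℂ) • ω := by simp [testPOVM]
  cases z
  · rw [hfalse, ptrans_sub, ptrans_one, ptrans_smul]
    exact hω2
  · rw [htrue, ptrans_smul]
    exact psd_smul_real hPT hc.le

end Instantiations

theorem stmt8 (dA dB : ℕ) (ρ σ : Matrix (Fin dA × Fin dB) (Fin dA × Fin dB) ℂ)
    (hρ : ρ.PosSemidef) (hρ1 : ρ.trace = 1) (hσ : σ.PosSemidef) (hσ1 : σ.trace = 1) :
    mrdiv (SEP (Fin dA) (Fin dB)) ⊤ ρ σ
      = (⨆ ω ∈ {ω : Matrix (Fin dA × Fin dB) (Fin dA × Fin dB) ℂ | ω.PosDef ∧ SepMat ω},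
          ((Real.log (tr2 ρ ω / tr2 σ ω) : ℝ) : EReal)) ∧
    mrdiv (PPT (Fin dA) (Fin dB)) ⊤ ρ σ
      = ⨆ ω ∈ {ω : Matrix (Fin dA × Fin dB) (Fin dA × Fin dB) ℂ |
            ω.PosDef ∧ (ptrans ω).PosSemidef},
          ((Real.log (tr2 ρ ω / tr2 σ ω) : ℝ) : EReal) := by
  have hne : Nonempty (Fin dA × Fin dB) := by
    by_contra h
    rw [not_nonempty_iff] at h
    rw [Matrix.trace, Finset.univ_eq_empty, Finset.sum_empty] at hρ1
    exact one_ne_zero hρ1.symm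
  constructor
  · exact key_variational (SEP (Fin dA) (Fin dB)) SepMat (fun M hM z => hM z)
      (fun ω hP ε hε => sepMat_add hP (sepMat_smul sepMat_one hε.le))
      (fun ω hPD hP => sep_build ω hPD hP) ρ σ hρ hρ1 hσ hσ1
  · exact key_variational (PPT (Fin dA) (Fin dB)) (fun ω => (ptrans ω).PosSemidef)
      (fun M hM z => hM z)
      (fun ω hP ε hε => by
        show (ptrans (ω + (ε : ℂ) • 1)).PosSemidef
        rw [ptrans_add, ptrans_smul, ptrans_one]
        exact Matrix.PosSemidef.add hP (psd_smul_real Matrix.PosSemidef.one hε.le))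
      (fun ω hPD hP => ppt_build ω hPD hP) ρ σ hρ hρ1 hσ hσ1


end MRD
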